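/- (Pebble games and slider-pinning.) Let H be any reachable configuration of the (2,3)-pebble game with colors. Replacing each pebble that lies on a vertex by a loop at that vertex yields a (2,0,3)-graded-tight graph: every subgraph of the resulting graph containing no loops is (2,3)-sparse, and the resulting graph, with loops included, is (2,0)-tight. -/

import Mathlib

open scoped Classical

namespace PebbleGame

/-- A configuration of the `(k,ℓ)`-pebble game with colors: a directed multigraph
whose edges are records `(tail, head, color)` (the color of an edge is the color of
the unique pebble lying on it), together with the multiset of colors of the pebbles
sitting on each vertex. -/
structure PGConfig (V : Type) (k : ℕ) where
  edges : Multiset (V × V × Fin k)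
  pebs : V → Multiset (Fin k)

variable {V : Type} [DecidableEq V] {k ℓ : ℕ}

/-- The configuration resulting from an add-edge move: a pebble of color `c` is picked
up from `v`, the directed edge `vw` is added and the pebble is placed on it. -/
def addEdgeCfg (H : PGConfig V k) (v w : V) (c : Fin k) : PGConfig V k :=
  ⟨(v, w, c) ::ₘ H.edges, Function.update H.pebs v ((H.pebs v).erase c)⟩

/-- The configuration resulting from a pebble-slide move along the edge `(v, w, c)`,
using a pebble of color `c'` on `w`: the edge `vw` is replaced by `wv`, the pebble of
color `c` that was on the edge goes to `v`, and the pebble of color `c'` from `w` is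
placed on the new edge `wv`. -/
def slideCfg (H : PGConfig V k) (v w : V) (c c' : Fin k) : PGConfig V k :=
  ⟨(w, v, c') ::ₘ H.edges.erase (v, w, c),
    Function.update (Function.update H.pebs w ((H.pebs w).erase c')) v
      (c ::ₘ Function.update H.pebs w ((H.pebs w).erase c') v)⟩

/-- A legal move of the `(k,ℓ)`-pebble game with colors. -/
inductive Step (k ℓ : ℕ) : PGConfig V k → PGConfig V k → Prop
  | add (H : PGConfig V k) (v w : V) (c : Fin k)
      (hpeb : ℓ + 1 ≤ ∑ u ∈ ({v, w} : Finset V), (H.pebs u).card)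
      (hc : c ∈ H.pebs v) :
      Step k ℓ H (addEdgeCfg H v w c)
  | slide (H : PGConfig V k) (v w : V) (c c' : Fin k)
      (he : (v, w, c) ∈ H.edges)
      (hc : c' ∈ H.pebs w) :
      Step k ℓ H (slideCfg H v w c c')

/-- The initial configuration: no edges, and one pebble of each of the `k` colors on
every vertex. -/
def initCfg (V : Type) [DecidableEq V] [Fintype V] (k : ℕ) : PGConfig V k :=
  ⟨0, fun _ => Finset.univ.val⟩

/-- A configuration is reachable if it arises from the initial configuration by a
finite sequence of legal moves. -/
def Reachable [Fintype V] (k ℓ : ℕ) (H : PGConfig V k) : Prop :=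
  Relation.ReflTransGen (Step k ℓ) (initCfg V k) H

/-- The underlying undirected multigraph (multiset of edges) of a configuration. -/
def undirected (H : PGConfig V k) : Multiset (Sym2 V) :=
  H.edges.map fun e => s(e.1, e.2.1)

/-- The (undirected) edges of a configuration carrying a pebble of color `c`. -/
def monoEdges (H : PGConfig V k) (c : Fin k) : Multiset (Sym2 V) :=
  (H.edges.filter fun e => e.2.2 = c).map fun e => s(e.1, e.2.1)

/-- The undirected edges of color `c` among a multiset `F` of directed colored
edges. -/
def monoOf (F : Multiset (V × V × Fin k)) (c : Fin k) : Multiset (Sym2 V) :=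
  (F.filter fun e => e.2.2 = c).map fun e => s(e.1, e.2.1)

/-- `G` (a multiset of undirected edges on the fixed finite vertex set `V`) is a
`(k,ℓ)`-pebble-game graph if it is the underlying undirected multigraph of some
reachable configuration. -/
def PebbleGameGraph [Fintype V] (k ℓ : ℕ) (E : Multiset (Sym2 V)) : Prop :=
  ∃ H : PGConfig V k, Reachable k ℓ H ∧ undirected H = E

/-- The edges of `E` spanned by the vertex set `S` (both endpoints in `S`). -/
def spanned (E : Multiset (Sym2 V)) (S : Finset V) : Multiset (Sym2 V) :=
  E.filter fun e => e ∈ S.sym2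

/-- A multigraph is `(k,ℓ)`-sparse if every nonempty set of `n'` vertices spans at
most `k n' - ℓ` edges. -/
def Sparse (k ℓ : ℕ) (E : Multiset (Sym2 V)) : Prop :=
  ∀ S : Finset V, S.Nonempty → (spanned E S).card ≤ k * S.card - ℓ

/-- A multigraph is `(k,ℓ)`-tight if it is `(k,ℓ)`-sparse with exactly `k|V| - ℓ`
edges. -/
def Tight [Fintype V] (k ℓ : ℕ) (E : Multiset (Sym2 V)) : Prop :=
  Sparse k ℓ E ∧ E.card = k * Fintype.card V - ℓ

/-- Connectivity (as undirected multigraphs) via the edges of `F`. -/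
def Conn (F : Multiset (Sym2 V)) : V → V → Prop :=
  Relation.ReflTransGen fun a b => s(a, b) ∈ F

/-- The connected components of the graph with vertex set `S` and edge multiset `F`
(whose edges are assumed to be spanned by `S`), as a finset of vertex sets. -/
noncomputable def components (S : Finset V) (F : Multiset (Sym2 V)) : Finset (Finset V) :=
  S.image fun v => S.filter fun u => Conn F v u

/-- The tree-pieces of the graph `(S, F)`: connected components that contain no cycle,
i.e. whose spanned edge count is exactly one less than their vertex count (an isolated
vertex is a tree-piece). -/
noncomputable def treePieces (S : Finset V) (F : Multiset (Sym2 V)) : Finset (Finset V) :=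
  (components S F).filter fun C => (spanned F C).card + 1 = C.card

/-- The number of tree-pieces of the graph `(S, F)`. -/
noncomputable def treePieceCount (S : Finset V) (F : Multiset (Sym2 V)) : ℕ :=
  (treePieces S F).card

/-- A multigraph contains a cycle iff some nonempty vertex set spans at least as many
edges as it has vertices. -/
def HasCycle (F : Multiset (Sym2 V)) : Prop :=
  ∃ S : Finset V, S.Nonempty ∧ S.card ≤ (spanned F S).card

/-- A spanning tree on the whole (finite) vertex set: connected with `|V| - 1` edges. -/
def IsSpanningTree [Fintype V] (T : Multiset (Sym2 V)) : Prop :=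
  (∀ u v : V, Conn T u v) ∧ T.card + 1 = Fintype.card V

/-- A spanning map-graph: the edges admit an orientation in which every vertex has
out-degree exactly one. -/
def IsSpanningMapGraph [Fintype V] (T : Multiset (Sym2 V)) : Prop :=
  ∃ M : Multiset (V × V), M.map (fun p => s(p.1, p.2)) = T ∧
    ∀ v : V, (M.filter fun p => p.1 = v).card = 1

/-- A `(k,ℓ)`-maps-and-trees decomposition: `ℓ` edge-disjoint spanning trees and
`k - ℓ` edge-disjoint spanning map-graphs whose union is `E`. -/
def MapsAndTrees [Fintype V] (k ℓ : ℕ) (E : Multiset (Sym2 V)) : Prop :=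
  ∃ (T : Fin ℓ → Multiset (Sym2 V)) (M : Fin (k - ℓ) → Multiset (Sym2 V)),
    ((∑ i, T i) + ∑ j, M j) = E ∧ (∀ i, IsSpanningTree (T i)) ∧
      ∀ j, IsSpanningMapGraph (M j)

/-- `(S, T)` is a (possibly single-vertex) tree: nonempty vertex set `S`, edges spanned
by `S`, connected on `S`, and `|T| + 1 = |S|`. -/
def IsTreeOn (S : Finset V) (T : Multiset (Sym2 V)) : Prop :=
  S.Nonempty ∧ (∀ e ∈ T, e ∈ S.sym2) ∧ (∀ u ∈ S, ∀ v ∈ S, Conn T u v) ∧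
    T.card + 1 = S.card

/-- An `ℓTk` decomposition of `E`: `ℓ` edge-disjoint (not necessarily spanning,
possibly single-vertex) trees `(S i, T i)` whose edges partition `E`, such that every
vertex belongs to exactly `k` of the trees. -/
def LTkDecomp (k ℓ : ℕ) (E : Multiset (Sym2 V)) (S : Fin ℓ → Finset V)
    (T : Fin ℓ → Multiset (Sym2 V)) : Prop :=
  (∑ i, T i) = E ∧ (∀ i, IsTreeOn (S i) (T i)) ∧
    ∀ v : V, (Finset.univ.filter fun i => v ∈ S i).card = k

/-- A proper `ℓTk`: an `ℓTk` decomposition such that every nonempty subgraph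
(vertex set `U`, together with a sub-multiset `F i` of each tree spanned by `U`)
contains at least `ℓ` tree-pieces, the tree-pieces being the connected components of
the intersections of the trees with the subgraph. -/
def ProperLTk (k ℓ : ℕ) (E : Multiset (Sym2 V)) : Prop :=
  ∃ (S : Fin ℓ → Finset V) (T : Fin ℓ → Multiset (Sym2 V)),
    LTkDecomp k ℓ E S T ∧
      ∀ U : Finset V, U.Nonempty →
        ∀ F : Fin ℓ → Multiset (Sym2 V),
          (∀ i, F i ≤ T i) → (∀ i, ∀ e ∈ F i, e ∈ U.sym2) →
            ℓ ≤ ∑ i, treePieceCount (U ∩ S i) (F i)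

/-- One pebble-slide move (as a relation between configurations). -/
def SlideRel (k : ℕ) (A B : PGConfig V k) : Prop :=
  ∃ (v w : V) (c c' : Fin k), (v, w, c) ∈ A.edges ∧ c' ∈ A.pebs w ∧
    B = slideCfg A v w c c'

/-- A canonical move of the `(k,ℓ)`-pebble game with colors: add-edge moves cover the
new edge with a color present on both endpoints if one exists, and otherwise with the
highest-numbered color present; pebble-slide moves never create a monochromatic
cycle. -/
inductive CanStep (k ℓ : ℕ) : PGConfig V k → PGConfig V k → Prop
  | add (H : PGConfig V k) (v w : V) (c : Fin k)
      (hpeb : ℓ + 1 ≤ ∑ u ∈ ({v, w} : Finset V), (H.pebs u).card)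
      (hc : c ∈ H.pebs v)
      (hcanon : c ∈ H.pebs w ∨
        ((∀ c' : Fin k, c' ∈ H.pebs v → c' ∉ H.pebs w) ∧
          ∀ c' : Fin k, (c' ∈ H.pebs v ∨ c' ∈ H.pebs w) → c' ≤ c)) :
      CanStep k ℓ H (addEdgeCfg H v w c)
  | slide (H : PGConfig V k) (v w : V) (c c' : Fin k)
      (he : (v, w, c) ∈ H.edges)
      (hc : c' ∈ H.pebs w)
      (hnocycle : ∀ i : Fin k,
        HasCycle (monoEdges (slideCfg H v w c c') i) → HasCycle (monoEdges H i)) :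
      CanStep k ℓ H (slideCfg H v w c c')

/-- The graph obtained from a configuration by replacing every pebble lying on a
vertex by a loop at that vertex. -/
def withLoops [Fintype V] (H : PGConfig V k) : Multiset (Sym2 V) :=
  undirected H + Finset.univ.val.bind fun v => Multiset.replicate (H.pebs v).card s(v, v)

end PebbleGame
open PebbleGame

/-!
Charge the pebble on each edge to its tail. Every move then preserves that each vertex owns
exactly `k` pebbles, on itself or on its out-edges. The edges spanned by `S` have their tails
in `S`, so they number at most `k |S|` minus the pebbles on `S`. An add-edge move inside `S`
needs `ℓ + 1` pebbles on `S`, hence the underlying graph stays `(k,ℓ)`-sparse (slides do not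
change it). Loopless subgraphs of the graph with loops lie in the underlying graph, and turning
the pebbles on `S` into loops gives at most `k |S|` spanned edges, with equality for `S = V`.
-/

namespace PebbleGame

variable {V : Type} [DecidableEq V] {k ℓ : ℕ}

def tails (H : PGConfig V k) : Multiset V :=
  H.edges.map Prod.fst

/-- Every vertex owns exactly `k` pebbles, counting those on its out-edges. -/
def Balanced (H : PGConfig V k) : Prop :=
  ∀ v, (tails H).count v + (H.pebs v).card = k

theorem tails_addEdgeCfg (H : PGConfig V k) (v w : V) (c : Fin k) :
    tails (addEdgeCfg H v w c) = v ::ₘ tails H := by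
  simp [tails, addEdgeCfg]

theorem cons_tails_slideCfg {H : PGConfig V k} {v w : V} {c : Fin k} (c' : Fin k)
    (he : (v, w, c) ∈ H.edges) :
    v ::ₘ tails (slideCfg H v w c c') = w ::ₘ tails H := by
  conv_rhs => rw [tails, ← Multiset.cons_erase he]
  simp [tails, slideCfg, Multiset.cons_swap]

theorem undirected_slideCfg {H : PGConfig V k} {v w : V} {c : Fin k} (c' : Fin k)
    (he : (v, w, c) ∈ H.edges) :
    undirected (slideCfg H v w c c') = undirected H := by
  conv_rhs => rw [undirected, ← Multiset.cons_erase he]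
  simp [undirected, slideCfg, Sym2.eq_swap]

theorem card_pebs_slideCfg {H : PGConfig V k} (v : V) {w : V} (c : Fin k) {c' : Fin k}
    (hc : c' ∈ H.pebs w) (u : V) :
    ((slideCfg H v w c c').pebs u).card + (if u = w then 1 else 0) =
      (H.pebs u).card + (if u = v then 1 else 0) := by
  have hw := Multiset.card_pos_iff_exists_mem.2 ⟨c', hc⟩
  simp only [slideCfg, Function.update_apply]
  split_ifs <;> subst_vars <;> simp_all [Multiset.card_erase_of_mem] <;> omega

theorem balanced_initCfg [Fintype V] : Balanced (initCfg V k) := by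
  simp [Balanced, initCfg, tails]

theorem balanced_addEdgeCfg {H : PGConfig V k} (hB : Balanced H) {v : V} (w : V) {c : Fin k}
    (hc : c ∈ H.pebs v) : Balanced (addEdgeCfg H v w c) := by
  intro u
  have hv := Multiset.card_pos_iff_exists_mem.2 ⟨c, hc⟩
  have := hB u
  rw [tails_addEdgeCfg, Multiset.count_cons]
  by_cases huv : u = v
  · subst huv
    simp only [addEdgeCfg, Function.update_self, Multiset.card_erase_of_mem hc,
      Nat.pred_eq_sub_one, if_pos]
    omega
  · simpa [addEdgeCfg, huv] using this

theorem balanced_slideCfg {H : PGConfig V k} (hB : Balanced H) {v w : V} {c c' : Fin k}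
    (he : (v, w, c) ∈ H.edges) (hc : c' ∈ H.pebs w) : Balanced (slideCfg H v w c c') := by
  intro u
  have htails := congrArg (Multiset.count u) (cons_tails_slideCfg c' he)
  rw [Multiset.count_cons, Multiset.count_cons] at htails
  have := card_pebs_slideCfg v c hc u
  have := hB u
  omega

theorem Balanced.step {H H' : PGConfig V k} (hB : Balanced H) (hstep : Step k ℓ H H') :
    Balanced H' := by
  cases hstep with
  | add v w c _ hc => exact balanced_addEdgeCfg hB w hc
  | slide v w c c' he hc => exact balanced_slideCfg hB he hc

theorem Reachable.balanced [Fintype V] {H : PGConfig V k} (hH : Reachable k ℓ H) :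
    Balanced H := by
  induction hH with
  | refl => exact balanced_initCfg
  | tail _ hstep ih => exact ih.step hstep

theorem card_filter_mem_eq_sum_count (m : Multiset V) (S : Finset V) :
    (m.filter (· ∈ S)).card = ∑ v ∈ S, m.count v := by
  rw [← Multiset.sum_count_eq_card (s := S) fun a ha => (Multiset.mem_filter.1 ha).2]
  exact Finset.sum_congr rfl fun v hv => Multiset.count_filter_of_pos hv

theorem card_spanned_undirected_le (H : PGConfig V k) (S : Finset V) :
    (spanned (undirected H) S).card ≤ ∑ v ∈ S, (tails H).count v := by
  rw [← card_filter_mem_eq_sum_count, spanned, undirected, tails, Multiset.filter_map,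
    Multiset.filter_map, Multiset.card_map, Multiset.card_map]
  exact Multiset.card_le_card <| Multiset.monotone_filter_right _
    fun e he => (Finset.mk_mem_sym2_iff.1 he).1

/-- Edges spanned by `S` have their tails in `S`, and the pebbles and out-edges at `S`
number `k |S|`. -/
theorem Balanced.card_spanned_add_sum_card_pebs_le {H : PGConfig V k} (hB : Balanced H)
    (S : Finset V) :
    (spanned (undirected H) S).card + ∑ v ∈ S, (H.pebs v).card ≤ k * S.card := by
  have htotal : ∑ v ∈ S, ((tails H).count v + (H.pebs v).card) = k * S.card := by
    rw [Finset.sum_congr rfl fun v _ => hB v, Finset.sum_const, smul_eq_mul, mul_comm]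
  rw [Finset.sum_add_distrib] at htotal
  have := card_spanned_undirected_le H S
  omega

theorem Sparse.mono {E F : Multiset (Sym2 V)} (hE : Sparse k ℓ E) (hFE : F ≤ E) :
    Sparse k ℓ F := fun S hS =>
  (Multiset.card_le_card (Multiset.filter_le_filter _ hFE)).trans (hE S hS)

theorem sparse_initCfg [Fintype V] : Sparse k ℓ (undirected (initCfg V k)) := by
  intro S _
  simp [initCfg, undirected, spanned]

/-- The `ℓ + 1` pebbles needed to add an edge inside `S` are missing from the `k |S|`
that bound the edges already spanned by `S`. -/
theorem sparse_addEdgeCfg {H : PGConfig V k} (hS : Sparse k ℓ (undirected H))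
    (hB : Balanced H) {v w : V} (c : Fin k)
    (hpeb : ℓ + 1 ≤ ∑ u ∈ ({v, w} : Finset V), (H.pebs u).card) :
    Sparse k ℓ (undirected (addEdgeCfg H v w c)) := by
  intro S hSne
  have hcons : undirected (addEdgeCfg H v w c) = s(v, w) ::ₘ undirected H := by
    simp [undirected, addEdgeCfg]
  rw [hcons, spanned, Multiset.filter_cons]
  split_ifs with hvw
  · have hsub : ({v, w} : Finset V) ⊆ S := by
      rw [Finset.mk_mem_sym2_iff] at hvw
      exact Finset.insert_subset_iff.2 ⟨hvw.1, Finset.singleton_subset_iff.2 hvw.2⟩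
    have := Finset.sum_le_sum_of_subset (f := fun u => (H.pebs u).card) hsub
    have := hB.card_spanned_add_sum_card_pebs_le S
    rw [spanned] at this
    simp only [Multiset.singleton_add, Multiset.card_cons]
    omega
  · rw [zero_add]
    exact hS S hSne

theorem Sparse.step {H H' : PGConfig V k} (hS : Sparse k ℓ (undirected H)) (hB : Balanced H)
    (hstep : Step k ℓ H H') : Sparse k ℓ (undirected H') := by
  cases hstep with
  | add v w c hpeb _ => exact sparse_addEdgeCfg hS hB c hpeb
  | slide v w c c' he _ => rwa [undirected_slideCfg c' he]

theorem Reachable.sparse [Fintype V] {H : PGConfig V k} (hH : Reachable k ℓ H) :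
    Sparse k ℓ (undirected H) := by
  induction hH with
  | refl => exact sparse_initCfg
  | tail hreach hstep ih => exact ih.step (Reachable.balanced hreach) hstep

variable [Fintype V]

theorem le_undirected_of_le_withLoops {H : PGConfig V k} {F : Multiset (Sym2 V)}
    (hF : F ≤ withLoops H) (hloopless : ∀ e ∈ F, ¬e.IsDiag) : F ≤ undirected H := by
  refine Multiset.le_iff_count.2 fun e => ?_
  by_cases he : e ∈ F
  · have hloops : (Finset.univ.val.bind fun v =>
        Multiset.replicate (H.pebs v).card s(v, v)).count e = 0 := by
      refine Multiset.count_eq_zero.2 fun hmem => hloopless e he ?_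
      obtain ⟨v, -, hv⟩ := Multiset.mem_bind.1 hmem
      rw [Multiset.eq_of_mem_replicate hv]
      exact Sym2.mk_isDiag_iff.2 rfl
    simpa [withLoops, hloops] using Multiset.le_iff_count.1 hF e
  · simp [Multiset.count_eq_zero.2 he]

theorem card_spanned_withLoops (H : PGConfig V k) (S : Finset V) :
    (spanned (withLoops H) S).card =
      (spanned (undirected H) S).card + ∑ v ∈ S, (H.pebs v).card := by
  simp only [spanned, withLoops, Multiset.filter_add, Multiset.card_add, Multiset.filter_bind,
    Multiset.card_bind]
  rw [← Fintype.sum_ite_mem S]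
  congr 1
  refine Finset.sum_congr rfl fun v _ => ?_
  split_ifs with hv
  · rw [Function.comp_apply, Multiset.filter_eq_self.2, Multiset.card_replicate]
    intro e he
    rw [Multiset.eq_of_mem_replicate he, Finset.mk_mem_sym2_iff]
    exact ⟨hv, hv⟩
  · rw [Function.comp_apply, Multiset.filter_eq_nil.2, Multiset.card_zero]
    intro e he
    rw [Multiset.eq_of_mem_replicate he, Finset.mk_mem_sym2_iff]
    exact fun h => hv h.1

theorem Balanced.tight_withLoops {H : PGConfig V k} (hB : Balanced H) :
    Tight k 0 (withLoops H) := by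
  refine ⟨fun S _ => ?_, ?_⟩
  · rw [card_spanned_withLoops, Nat.sub_zero]
    exact hB.card_spanned_add_sum_card_pebs_le S
  · have hedges : (undirected H).card = ∑ v, (tails H).count v := by
      rw [Multiset.sum_count_eq_card fun v _ => Finset.mem_univ v]
      simp [undirected, tails]
    have hloops : (Finset.univ.val.bind fun v =>
        Multiset.replicate (H.pebs v).card s(v, v)).card = ∑ v, (H.pebs v).card := by
      simp [Multiset.card_bind]
    rw [withLoops, Multiset.card_add, hedges, hloops, ← Finset.sum_add_distrib,
      Finset.sum_congr rfl fun v _ => hB v, Finset.sum_const, smul_eq_mul, mul_comm,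
      Finset.card_univ, Nat.sub_zero]

end PebbleGame

/-- pebble games and slider-pinning: replacing the pebbles on vertices
of any reachable configuration of the `(2,3)`-pebble game by loops yields a
`(2,0,3)`-graded-tight graph: every subgraph containing no loops is `(2,3)`-sparse,
and the whole graph, loops included, is `(2,0)`-tight. -/
theorem pebbles_to_loops_graded_tight {V : Type} [Fintype V] [DecidableEq V]
    (H : PGConfig V 2) (hH : Reachable 2 3 H) :
    (∀ F : Multiset (Sym2 V), F ≤ withLoops H → (∀ e ∈ F, ¬e.IsDiag) →
        Sparse 2 3 F) ∧
      Tight 2 0 (withLoops H) :=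
  ⟨fun _F hF hloopless => hH.sparse.mono (le_undirected_of_le_withLoops hF hloopless),
    hH.balanced.tight_withLoops⟩
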